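/- For a standardized DFA ⟨Z_n,{a,b}⟩ with subgroup sequence H_k as defined, if H_ℓ = H_{ℓ+1} ⊊ Z_n for some ℓ, then the DFA is not completely reachable. -/

import Mathlib

/-- Action of a letter: `true` is `b : q ↦ q+1`, `false` is `a`. -/
def act {n : ℕ} (a : ZMod n → ZMod n) (q : ZMod n) (c : Bool) : ZMod n :=
  if c then q + 1 else a q

/-- Action of a word on a state. -/
def wact {n : ℕ} (a : ZMod n → ZMod n) (w : List Bool) (q : ZMod n) : ZMod n :=
  w.foldl (act a) q

/-- Excluded set of a word. -/
def excl {n : ℕ} (a : ZMod n → ZMod n) (w : List Bool) : Set (ZMod n) :=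
  {q | ∀ p, wact a w p ≠ q}

/-- Duplicate set of a word. -/
def dupl {n : ℕ} (a : ZMod n → ZMod n) (w : List Bool) : Set (ZMod n) :=
  {p | ∃ q₁ q₂, q₁ ≠ q₂ ∧ wact a w q₁ = p ∧ wact a w q₂ = p}

/-- Complete reachability for a standardized binary DFA on `ZMod n`. -/
def CompletelyReachable {n : ℕ} (a : ZMod n → ZMod n) : Prop :=
  ∀ S : Set (ZMod n), S.Nonempty → ∃ w : List Bool, Set.range (wact a w) = S

/-- Standardized DFA: `a` has defect 1 with excluded state `0`, and `0·a = dupl(a)`,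
i.e. `a 0` has a second preimage `r ≠ 0`. -/
def Standardized {n : ℕ} (a : ZMod n → ZMod n) : Prop :=
  Set.range a = {(0 : ZMod n)}ᶜ ∧ ∃ r : ZMod n, r ≠ 0 ∧ a r = a 0

/-- Edge of the Rystsov graph: for some word of defect 1, `q` is the excluded state
and `p` the duplicate state. -/
def RysEdge {n : ℕ} (a : ZMod n → ZMod n) (q p : ZMod n) : Prop :=
  ∃ w : List Bool, excl a w = {q} ∧ dupl a w = {p}

/-- The difference set `D₁`. -/
def D1 {n : ℕ} (a : ZMod n → ZMod n) : Set (ZMod n) :=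
  {p | RysEdge a 0 p}

/-- The set `D_k` built from a subgroup `H = H_{k-1}`. -/
def Dnext {n : ℕ} (a : ZMod n → ZMod n) (H : AddSubgroup (ZMod n)) (k : ℕ) : Set (ZMod n) :=
  {p | ∃ w : List Bool, p ∈ dupl a w ∧ (0 : ZMod n) ∈ excl a w ∧
    excl a w ⊆ (H : Set (ZMod n)) ∧ (excl a w).ncard ≤ k}

/-- The subgroup sequence `H_k`. -/
def Hk {n : ℕ} (a : ZMod n → ZMod n) : ℕ → AddSubgroup (ZMod n)
  | 0 => ⊥
  | k + 1 => AddSubgroup.closure (Dnext a (Hk a k) (k + 1))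

/-!
Let `H = H_ℓ = H_{ℓ+1}`. For a generator `p` of `H_{k+1}`, witnessed by a word `w`, and any `t`
with `a t ∈ H`, the word `w bᵗ a` has excluded set inside `{0} ∪ a (excl w + t) ⊆ H` (by induction
on `k`) and duplicate `a (p + t)`; stability forces `a (p + t) ∈ H`. So `{t | a t ∈ H}` is invariant
under translation by `H`, and since `a 0 ∈ H` this gives `a '' H ⊆ H`.

Since `a` collapses only the pair `{0, r}`, an `a`-invariant `H` satisfies `a⁻¹ H = H`, so a word
cannot end with `a` and have image `Hᶜ` unless its prefix already has image `Hᶜ`, while the letter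
`b` only translates the image. Hence no word has the image `Hᶜ` (nor any translate of it).
-/

open Pointwise AddAction

section FiniteSelfMap

variable {α : Type*} [Finite α] {f : α → α} {z r : α}

theorem bijective_update_of_range_eq_compl [DecidableEq α] (hrange : Set.range f = {z}ᶜ)
    (hr : r ≠ z) (hfr : f r = f z) : Function.Bijective (Function.update f r z) := by
  refine Finite.injective_iff_bijective.1 (Finite.injective_iff_surjective.2 fun y => ?_)
  by_cases hy : y = z
  · exact ⟨r, by simp [hy]⟩
  obtain ⟨x, rfl⟩ : y ∈ Set.range f := hrange ▸ hy
  by_cases hx : x = r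
  · exact ⟨z, by simp [hr.symm, hx, hfr]⟩
  · exact ⟨x, by simp [hx]⟩

theorem preimage_eq_of_image_subset (hrange : Set.range f = {z}ᶜ) (hr : r ≠ z)
    (hfr : f r = f z) {H : Set α} (hz : z ∈ H) (hH : f '' H ⊆ H) : f ⁻¹' H = H := by
  classical
  set g := Function.update f r z
  have hg := bijective_update_of_range_eq_compl hrange hr hfr
  have hfg : f ⁻¹' H = g ⁻¹' H := by
    ext x
    by_cases hx : x = r
    · subst hx
      simpa [g, hfr, hz] using hH ⟨z, hz, rfl⟩
    · simp [g, hx]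
  have hgH : g '' H ⊆ H := by
    rintro _ ⟨x, hx, rfl⟩
    by_cases hxr : x = r
    · simpa [g, hxr] using hz
    · simpa [g, hxr] using hH ⟨x, hx, rfl⟩
  have hgH' : g '' H = H := Set.map_eq_of_subset (f := ⟨g, hg.injective⟩) hgH
  calc f ⁻¹' H = g ⁻¹' (g '' H) := by rw [hfg, hgH']
    _ = H := Set.preimage_image_eq H hg.injective

theorem eq_compl_of_image_eq_compl {H S : Set α} (hH : f ⁻¹' H = H) (hS : f '' S = Hᶜ) :
    S = Hᶜ := by
  have hsub : S ⊆ Hᶜ := by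
    rw [← hH, ← Set.preimage_compl, ← hS]
    exact Set.subset_preimage_image f S
  exact Set.eq_of_subset_of_ncard_le hsub (hS ▸ Set.ncard_image_le (Set.toFinite S))

end FiniteSelfMap

section Words

variable {n : ℕ} (a : ZMod n → ZMod n)

theorem wact_append (u v : List Bool) : wact a (u ++ v) = wact a v ∘ wact a u :=
  funext fun _ => List.foldl_append

theorem wact_replicate_true_append_false (t : ℕ) (q : ZMod n) :
    wact a (List.replicate t true ++ [false]) q = a (q + t) := by
  induction t generalizing q with
  | zero => simp [wact, act]
  | succ t ih =>
    rw [List.replicate_succ, List.cons_append]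
    simp only [wact, List.foldl_cons, act, if_true] at ih ⊢
    rw [ih, Nat.cast_succ, add_assoc, add_comm 1]

theorem excl_eq_compl_range (w : List Bool) : excl a w = (Set.range (wact a w))ᶜ := by
  ext x
  simp [excl]

variable {a}

theorem excl_append_subset {u v : List Bool} :
    excl a (u ++ v) ⊆ excl a v ∪ wact a v '' excl a u := by
  simp only [excl_eq_compl_range, wact_append, Set.range_comp]
  intro x hx
  by_contra h
  simp only [Set.mem_union, Set.mem_compl_iff, not_or, not_not, Set.mem_image] at h
  obtain ⟨⟨y, rfl⟩, hy⟩ := h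
  exact hx ⟨y, not_not.1 fun h => hy ⟨y, h, rfl⟩, rfl⟩

theorem excl_subset_excl_append (u v : List Bool) : excl a v ⊆ excl a (u ++ v) := by
  simp only [excl_eq_compl_range, wact_append]
  exact Set.compl_subset_compl.2 (Set.range_comp_subset_range _ _)

theorem wact_mem_dupl_append {u : List Bool} {p : ZMod n} (hp : p ∈ dupl a u) (v : List Bool) :
    wact a v p ∈ dupl a (u ++ v) := by
  obtain ⟨q₁, q₂, hne, rfl, h₂⟩ := hp
  exact ⟨q₁, q₂, hne, by rw [wact_append]; rfl, by rw [wact_append, Function.comp_apply, h₂]⟩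

theorem excl_replicate_true_append_false (hrange : Set.range a = {0}ᶜ) (t : ℕ) :
    excl a (List.replicate t true ++ [false]) = {0} := by
  rw [excl_eq_compl_range, funext (wact_replicate_true_append_false a t),
    ← Function.comp_def a, (add_right_surjective _).range_comp, hrange,
    compl_compl]

end Words

section Stabilizer

variable {n : ℕ} [NeZero n] {a : ZMod n → ZMod n}

theorem Dnext_subset_stabilizer (hrange : Set.range a = {0}ᶜ) {H K : AddSubgroup (ZMod n)}
    {k ℓ : ℕ} (hH : Dnext a H (ℓ + 1) ⊆ H) (hk : k + 1 ≤ ℓ)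
    (hK : K ≤ stabilizer (ZMod n) (a ⁻¹' (H : Set (ZMod n)))) :
    Dnext a K (k + 1) ⊆ stabilizer (ZMod n) (a ⁻¹' (H : Set (ZMod n))) := by
  rintro p ⟨w, hp, h0, hwK, hcard⟩
  rw [SetLike.mem_coe, mem_stabilizer_set_iff_vadd_set_subset (Set.toFinite _)]
  rintro _ ⟨t, ht, rfl⟩
  set v := List.replicate t.val true ++ [false]
  have hv (q : ZMod n) : wact a v q = a (q + t) := by
    rw [wact_replicate_true_append_false, ZMod.natCast_zmod_val]
  have hexcl_v : excl a v = {0} := excl_replicate_true_append_false hrange _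
  have hexcl_sub : excl a (w ++ v) ⊆ {0} ∪ wact a v '' excl a w :=
    hexcl_v ▸ excl_append_subset
  have hexcl_H : excl a (w ++ v) ⊆ H := by
    intro x hx
    rcases hexcl_sub hx with rfl | ⟨y, hy, rfl⟩
    · exact zero_mem H
    · rw [hv]
      exact (mem_stabilizer_set.1 (hK (hwK hy)) t).2 ht
  have hcard : (excl a (w ++ v)).ncard ≤ ℓ + 1 :=
    calc (excl a (w ++ v)).ncard
        ≤ ({0} ∪ wact a v '' excl a w).ncard := Set.ncard_le_ncard hexcl_sub
      _ ≤ ({0} : Set (ZMod n)).ncard + (wact a v '' excl a w).ncard := Set.ncard_union_le _ _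
      _ ≤ 1 + (excl a w).ncard := by
          rw [Set.ncard_singleton]
          exact Nat.add_le_add_left (Set.ncard_image_le (Set.toFinite _)) 1
      _ ≤ ℓ + 1 := by omega
  have hdupl := wact_mem_dupl_append hp v
  rw [hv] at hdupl
  have h0' : (0 : ZMod n) ∈ excl a (w ++ v) :=
    excl_subset_excl_append w v (hexcl_v ▸ rfl)
  exact hH ⟨w ++ v, hdupl, h0', hexcl_H, hcard⟩

theorem Hk_le_stabilizer (hrange : Set.range a = {0}ᶜ) {H : AddSubgroup (ZMod n)} {ℓ : ℕ}
    (hH : Dnext a H (ℓ + 1) ⊆ H) :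
    ∀ k ≤ ℓ, Hk a k ≤ stabilizer (ZMod n) (a ⁻¹' (H : Set (ZMod n)))
  | 0, _ => bot_le
  | k + 1, hk => (AddSubgroup.closure_le _).2 <|
      Dnext_subset_stabilizer hrange hH hk (Hk_le_stabilizer hrange hH k (by omega))

theorem image_Hk_subset_of_stable (hstd : Standardized a) {ℓ : ℕ}
    (hℓ : Hk a ℓ = Hk a (ℓ + 1)) : a '' Hk a ℓ ⊆ Hk a ℓ := by
  obtain ⟨hrange, r, hr, har⟩ := hstd
  have hD : Dnext a (Hk a ℓ) (ℓ + 1) ⊆ Hk a ℓ := by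
    intro p hp
    rw [SetLike.mem_coe, hℓ]
    exact AddSubgroup.subset_closure hp
  have hexcl : excl a [false] = {0} := excl_replicate_true_append_false hrange 0
  have ha0 : a 0 ∈ Hk a ℓ :=
    hD ⟨[false], ⟨0, r, hr.symm, rfl, har⟩, hexcl ▸ rfl,
      hexcl ▸ Set.singleton_subset_iff.2 (zero_mem _), by rw [hexcl, Set.ncard_singleton]; omega⟩
  rintro _ ⟨h, hh, rfl⟩
  simpa using (mem_stabilizer_set.1 (Hk_le_stabilizer hrange hD ℓ le_rfl hh) 0).2 ha0

end Stabilizer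

section Reachability

variable {n : ℕ} [NeZero n] {a : ZMod n → ZMod n}

theorem range_wact_ne_vadd_compl (h0 : (0 : ZMod n) ∉ Set.range a) {H : AddSubgroup (ZMod n)}
    (hH : a ⁻¹' (H : Set (ZMod n)) = H) (w : List Bool) (d : ZMod n) :
    Set.range (wact a w) ≠ d +ᵥ (H : Set (ZMod n))ᶜ := by
  induction w using List.reverseRecOn generalizing d with
  | nil =>
    intro h
    have hd : d ∈ d +ᵥ (H : Set (ZMod n))ᶜ := h ▸ ⟨d, rfl⟩
    rw [Set.mem_vadd_set_iff_neg_vadd_mem, vadd_eq_add, neg_add_cancel] at hd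
    exact hd (zero_mem H)
  | append_singleton w c ih =>
    intro h
    rw [wact_append, Set.range_comp] at h
    cases c with
    | true =>
      apply ih (-1 + d)
      have hb : wact a [true] = ((1 : ZMod n) +ᵥ ·) := funext fun q => add_comm q 1
      rw [hb, Set.image_vadd] at h
      rw [← vadd_vadd, ← h, neg_vadd_vadd]
    | false =>
      have ha : wact a [false] = a := rfl
      rw [ha] at h
      have hd : d ∈ H := by
        have : (0 : ZMod n) ∉ d +ᵥ (H : Set (ZMod n))ᶜ :=
          h ▸ fun h' => h0 (Set.image_subset_range _ _ h')
        rw [Set.mem_vadd_set_iff_neg_vadd_mem, vadd_eq_add, add_zero, Set.mem_compl_iff,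
          not_not] at this
        simpa using this
      rw [Set.vadd_set_compl, vadd_coe_set hd] at h
      exact ih 0 (by rw [eq_compl_of_image_eq_compl hH h, zero_vadd])

theorem CompletelyReachable.eq_top_of_image_subset (hstd : Standardized a)
    (hcr : CompletelyReachable a) {H : AddSubgroup (ZMod n)} (hH : a '' H ⊆ H) : H = ⊤ := by
  obtain ⟨hrange, r, hr, har⟩ := hstd
  have hpre := preimage_eq_of_image_subset hrange hr har (zero_mem H) hH
  by_contra hne
  have hne' : ((H : Set (ZMod n))ᶜ).Nonempty := by
    rwa [Set.nonempty_compl, Ne, AddSubgroup.coe_eq_univ]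
  obtain ⟨w, hw⟩ := hcr _ hne'
  exact range_wact_ne_vadd_compl (by simp [hrange]) hpre w 0 (by rw [hw, zero_vadd])

end Reachability

theorem not_completely_reachable_of_stable_proper {n : ℕ} (hn : 2 ≤ n)
    (a : ZMod n → ZMod n) (hstd : Standardized a) (ℓ : ℕ)
    (hℓ : Hk a ℓ = Hk a (ℓ + 1)) (hproper : Hk a ℓ ≠ ⊤) :
    ¬ CompletelyReachable a := by
  have : NeZero n := ⟨by omega⟩
  exact fun hcr => hproper (hcr.eq_top_of_image_subset hstd (image_Hk_subset_of_stable hstd hℓ))
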